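/- Let μ be a finitely additive ℚ_p-valued measure on ℤ_p satisfying the symmetry μ(A) − μ(−A) + μ(1−A) − μ(A−1) = 0 for all clopen sets A (where −A, 1−A, A−1 are images of A under the respective affine maps). Then for every odd nonnegative integer k, the moment ∫_{ℤ_p} x^k dμ(x) vanishes. -/

import Mathlib

/-!
Write `P f (x) = f(x) − f(−x) + f(1−x) − f(x+1)` (this is `symmetrize f`; the paper's `P_q` is
`P (x^q)`). At each level `ℤ/p^nℤ` the symmetry hypothesis says that `μ` is killed by the adjoint
of `P`, so `∑ⱼ P f (j) μ(j) = 0` exactly, for every `f`. For a Lipschitz `f` on `ℤ_p` the Riemann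
sum of `P f` differs from this exact sum by `O(p^{-n})`, because the representatives in
`[0, p^n)` of `−j`, `1 − j`, `j + 1` agree with `−j`, `1 − j`, `j + 1` modulo `p^n`; hence
`∫ P f dμ = 0`. For odd `q`, `P (x^q) = ∑_{m<q} ((−1)^m − 1) C(q,m) x^m` involves only odd `m`,
and the coefficient of `x^{q−2}` is nonzero, so induction on odd `k` with `q = k + 2` kills every
odd moment.
-/

open Filter Topology
/-- A `ℚ_p`-valued measure on `ℤ_p`: a compatible (and bounded) family of
functions `ℤ/p^nℤ → ℚ_p`, equivalently a finitely additive function on clopen sets. -/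
structure PadicMeasure (p : ℕ) [Fact p.Prime] where
  val : ∀ n : ℕ, ZMod (p ^ n) → ℚ_[p]
  compat : ∀ (n : ℕ) (x : ZMod (p ^ n)),
    val n x = ∑ y ∈ Finset.univ.filter
      (fun y : ZMod (p ^ (n + 1)) =>
        ZMod.castHom (pow_dvd_pow p (Nat.le_succ n)) (ZMod (p ^ n)) y = x),
      val (n + 1) y
  bounded : ∃ C : ℝ, ∀ (n : ℕ) (x : ZMod (p ^ n)), ‖val n x‖ ≤ C

/-- Riemann sum of level `n` of `f` against the measure. -/
noncomputable def PadicMeasure.riemannSum {p : ℕ} [Fact p.Prime]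
    (μ : PadicMeasure p) (f : ℤ_[p] → ℚ_[p]) (n : ℕ) : ℚ_[p] :=
  ∑ i : ZMod (p ^ n), f ((i.val : ℤ_[p])) * μ.val n i

/-- `∫ f dμ = c`, as a limit of Riemann sums. -/
def PadicMeasure.HasIntegral {p : ℕ} [Fact p.Prime]
    (μ : PadicMeasure p) (f : ℤ_[p] → ℚ_[p]) (c : ℚ_[p]) : Prop :=
  Tendsto (μ.riemannSum f) atTop (𝓝 c)

open Finset
open scoped NNReal

def symmetrize {R M : Type*} [Ring R] [AddCommGroup M] (f : R → M) (x : R) : M :=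
  f x - f (-x) + f (1 - x) - f (x + 1)

theorem sum_symmetrize_mul_eq_zero {R K : Type*} [Ring R] [Fintype R] [Ring K] {w : R → K}
    (hw : ∀ j, w j - w (-j) + w (1 - j) - w (j - 1) = 0) (f : R → K) :
    ∑ j, symmetrize f j * w j = 0 := by
  have e₁ : ∑ j, f (-j) * w j = ∑ j, f j * w (-j) :=
    Fintype.sum_equiv (Equiv.neg R) _ _ fun j => by simp
  have e₂ : ∑ j, f (1 - j) * w j = ∑ j, f j * w (1 - j) :=
    Fintype.sum_equiv (Equiv.subLeft 1) _ _ fun j => by simp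
  have e₃ : ∑ j, f (j + 1) * w j = ∑ j, f j * w (j - 1) :=
    Fintype.sum_equiv (Equiv.addRight 1) _ _ fun j => by simp
  calc ∑ j, symmetrize f j * w j
      = ∑ j, f j * (w j - w (-j) + w (1 - j) - w (j - 1)) := by
        simp only [symmetrize, sub_mul, add_mul, mul_sub, mul_add, sum_sub_distrib,
          sum_add_distrib, e₁, e₂, e₃]
    _ = 0 := by simp [hw]

theorem symmetrize_pow {R : Type*} [CommRing R] {q : ℕ} (hq : Odd q) (x : R) :
    symmetrize (· ^ q) x = ∑ m ∈ range q, ((-1) ^ m - 1) * q.choose m * x ^ m := by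
  have h₁ : (1 - x) ^ q = ∑ m ∈ range (q + 1), (-1) ^ m * q.choose m * x ^ m := by
    rw [sub_eq_neg_add, add_pow]
    exact sum_congr rfl fun m _ => by rw [neg_pow]; ring
  have h₂ : (x + 1) ^ q = ∑ m ∈ range (q + 1), (q.choose m : R) * x ^ m := by
    rw [add_pow]
    exact sum_congr rfl fun m _ => by ring
  have h₃ : ∑ m ∈ range q, ((-1) ^ m - 1) * q.choose m * x ^ m
      = ∑ m ∈ range q, (-1) ^ m * q.choose m * x ^ m - ∑ m ∈ range q, (q.choose m : R) * x ^ m := by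
    rw [← sum_sub_distrib]
    exact sum_congr rfl fun m _ => by ring
  rw [symmetrize, hq.neg_pow, h₁, h₂, sum_range_succ, sum_range_succ, hq.neg_one_pow,
    Nat.choose_self, h₃]
  push_cast
  ring

section Padic

variable {p : ℕ} [Fact p.Prime]

theorem PadicInt.norm_sub_le_of_toZModPow_eq {n : ℕ} {x y : ℤ_[p]}
    (h : PadicInt.toZModPow n x = PadicInt.toZModPow n y) :
    ‖x - y‖ ≤ (p : ℝ) ^ (-n : ℤ) := by
  rw [PadicInt.norm_le_pow_iff_mem_span_pow, ← PadicInt.ker_toZModPow, RingHom.mem_ker, map_sub,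
    h, sub_self]

theorem PadicInt.toZModPow_natCast_val {n : ℕ} (j : ZMod (p ^ n)) :
    PadicInt.toZModPow n (j.val : ℤ_[p]) = j := by
  rw [map_natCast, ZMod.natCast_zmod_val]

theorem PadicInt.lipschitzWith_coe_pow (k : ℕ) :
    LipschitzWith 1 fun x : ℤ_[p] => (x : ℚ_[p]) ^ k := by
  refine LipschitzWith.of_dist_le_mul fun x y => ?_
  obtain ⟨c, hc⟩ := sub_dvd_pow_sub_pow x y k
  rw [dist_eq_norm, dist_eq_norm, NNReal.coe_one, one_mul, ← PadicInt.coe_pow,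
    ← PadicInt.coe_pow, ← PadicInt.coe_sub, PadicInt.padic_norm_e_of_padicInt, hc, norm_mul]
  exact mul_le_of_le_one_right (norm_nonneg _) (PadicInt.norm_le_one c)

theorem symmetrize_coe_pow {q : ℕ} (hq : Odd q) :
    symmetrize (fun x : ℤ_[p] => (x : ℚ_[p]) ^ q) =
      ∑ m ∈ range q, (((-1) ^ m - 1) * q.choose m : ℚ_[p]) • fun x : ℤ_[p] => (x : ℚ_[p]) ^ m := by
  funext x
  simpa [symmetrize, Finset.sum_apply, mul_assoc] using symmetrize_pow hq (x : ℚ_[p])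

variable {f : ℤ_[p] → ℚ_[p]} {K : ℝ≥0}

theorem LipschitzWith.norm_sub_natCast_val_le (hf : LipschitzWith K f) {n : ℕ} {x : ℤ_[p]}
    {j : ZMod (p ^ n)} (h : PadicInt.toZModPow n x = j) :
    ‖f x - f j.val‖ ≤ K * (p : ℝ) ^ (-n : ℤ) := by
  rw [← dist_eq_norm]
  refine (hf.dist_le_mul _ _).trans (mul_le_mul_of_nonneg_left ?_ K.2)
  rw [dist_eq_norm]
  exact PadicInt.norm_sub_le_of_toZModPow_eq (by rw [h, PadicInt.toZModPow_natCast_val])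

theorem LipschitzWith.norm_symmetrize_sub_symmetrize_val_le (hf : LipschitzWith K f) {n : ℕ}
    (j : ZMod (p ^ n)) :
    ‖symmetrize f (j.val : ℤ_[p]) - symmetrize (fun i : ZMod (p ^ n) => f i.val) j‖
      ≤ K * (p : ℝ) ^ (-n : ℤ) := by
  have hj := PadicInt.toZModPow_natCast_val j
  have h₁ := hf.norm_sub_natCast_val_le (x := -j.val) (j := -j) (by rw [map_neg, hj])
  have h₂ := hf.norm_sub_natCast_val_le (x := 1 - j.val) (j := 1 - j) (by rw [map_sub, map_one, hj])
  have h₃ := hf.norm_sub_natCast_val_le (x := j.val + 1) (j := j + 1) (by rw [map_add, map_one, hj])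
  have hsplit : symmetrize f (j.val : ℤ_[p]) - symmetrize (fun i : ZMod (p ^ n) => f i.val) j
      = -(f (-j.val) - f (-j).val) + (f (1 - j.val) - f (1 - j).val)
        + -(f (j.val + 1) - f (j + 1).val) := by
    simp only [symmetrize]
    abel
  rw [hsplit]
  refine (IsUltrametricDist.norm_add_le_max _ _).trans (max_le ?_ (by rwa [norm_neg]))
  exact (IsUltrametricDist.norm_add_le_max _ _).trans (max_le (by rwa [norm_neg]) h₂)

namespace PadicMeasure

variable (μ : PadicMeasure p)

theorem riemannSum_add (f g : ℤ_[p] → ℚ_[p]) :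
    μ.riemannSum (f + g) = μ.riemannSum f + μ.riemannSum g := by
  funext n
  simp [riemannSum, add_mul, sum_add_distrib]

theorem riemannSum_smul (c : ℚ_[p]) (f : ℤ_[p] → ℚ_[p]) :
    μ.riemannSum (c • f) = c • μ.riemannSum f := by
  funext n
  simp [riemannSum, mul_sum, mul_assoc]

def kerIntegral : Submodule ℚ_[p] (ℤ_[p] → ℚ_[p]) where
  carrier := {f | μ.HasIntegral f 0}
  add_mem' {f g} hf hg := by
    show Tendsto _ _ _
    rw [riemannSum_add, ← add_zero (0 : ℚ_[p])]
    exact hf.add hg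
  zero_mem' := by
    have h : μ.riemannSum 0 = 0 := funext fun n => by simp [riemannSum]
    show Tendsto _ _ _
    rw [h]
    exact tendsto_const_nhds
  smul_mem' c f hf := by
    show Tendsto _ _ _
    rw [riemannSum_smul, ← smul_zero c]
    exact hf.const_smul c

variable {μ}

theorem norm_riemannSum_symmetrize_le
    (hsym : ∀ (n : ℕ) (i : ZMod (p ^ n)),
      μ.val n i - μ.val n (-i) + μ.val n (1 - i) - μ.val n (i - 1) = 0)
    (hf : LipschitzWith K f) {C : ℝ} (hC : ∀ (n : ℕ) (x : ZMod (p ^ n)), ‖μ.val n x‖ ≤ C)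
    (n : ℕ) :
    ‖μ.riemannSum (symmetrize f) n‖ ≤ K * (p : ℝ) ^ (-n : ℤ) * C := by
  have hexact := sum_symmetrize_mul_eq_zero (hsym n) fun i => f i.val
  have hC₀ : 0 ≤ C := (norm_nonneg _).trans (hC 0 0)
  rw [riemannSum, ← sub_zero (∑ _, _), ← hexact, ← sum_sub_distrib]
  refine IsUltrametricDist.norm_sum_le_of_forall_le_of_nonneg (by positivity) fun j _ => ?_
  rw [← sub_mul, norm_mul]
  exact mul_le_mul (hf.norm_symmetrize_sub_symmetrize_val_le j) (hC n j) (norm_nonneg _)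
    (by positivity)

theorem symmetrize_mem_kerIntegral
    (hsym : ∀ (n : ℕ) (i : ZMod (p ^ n)),
      μ.val n i - μ.val n (-i) + μ.val n (1 - i) - μ.val n (i - 1) = 0)
    (hf : LipschitzWith K f) : symmetrize f ∈ μ.kerIntegral := by
  obtain ⟨C, hC⟩ := μ.bounded
  have hp : (p : ℝ)⁻¹ < 1 := inv_lt_one_of_one_lt₀ (by exact_mod_cast (Fact.out : p.Prime).one_lt)
  have hbound : Tendsto (fun n : ℕ => K * (p : ℝ) ^ (-n : ℤ) * C) atTop (𝓝 0) := by
    simpa [zpow_neg, inv_pow] using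
      ((tendsto_pow_atTop_nhds_zero_of_lt_one (by positivity) hp).const_mul (K : ℝ)).mul_const C
  exact squeeze_zero_norm (norm_riemannSum_symmetrize_le hsym hf hC) hbound

end PadicMeasure

end Padic

/-- If `μ(A) − μ(−A) + μ(1−A) − μ(A−1) = 0` for all clopen `A`, then every odd
moment `∫ x^k dμ` vanishes. -/
theorem odd_moments_vanish (p : ℕ) [Fact p.Prime] (μ : PadicMeasure p)
    (hsym : ∀ (n : ℕ) (i : ZMod (p ^ n)),
      μ.val n i - μ.val n (-i) + μ.val n (1 - i) - μ.val n (i - 1) = 0)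
    (k : ℕ) (hk : Odd k) :
    μ.HasIntegral (fun x => (x : ℚ_[p]) ^ k) 0 := by
  induction k using Nat.strong_induction_on with
  | _ k ih =>
  have hP := μ.symmetrize_mem_kerIntegral hsym (PadicInt.lipschitzWith_coe_pow (k + 1 + 1))
  rw [symmetrize_coe_pow hk.add_one.add_one, sum_range_succ, sum_range_succ,
    hk.add_one.neg_one_pow, sub_self, zero_mul, zero_smul, add_zero] at hP
  refine (Submodule.smul_mem_iff _ ?_).1 ((Submodule.add_mem_iff_right _ ?_).1 hP)
  · rw [hk.neg_one_pow]
    exact mul_ne_zero (by norm_num) (Nat.cast_ne_zero.2 (Nat.choose_pos (by omega)).ne')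
  · refine Submodule.sum_mem _ fun m hm => ?_
    rcases Nat.even_or_odd m with hm_even | hm_odd
    · simp [hm_even.neg_one_pow]
    · exact Submodule.smul_mem _ _ (ih m (mem_range.1 hm) hm_odd)
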